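/- Segment level decrease along a trajectory: for i < w in [0, m^ℓ), iterating the intermediate-destination map i ↦ x(i,w) reaches w in at most ℓ steps, and the segment levels j(i,w), j(x(i,w),w), j(x(x(i,w),w),w), … form a strictly decreasing sequence. -/

import Mathlib

/-- The `j`-th base-`m` digit of `i`. -/
def digit (m j i : ℕ) : ℕ := (i / m ^ j) % m

/-- The largest base-`m` digit position (below `ℓ`) in which `i` and `w` differ. -/
def topDiff (m ℓ i w : ℕ) : ℕ :=
  Nat.findGreatest (fun j => digit m j i ≠ digit m j w) ℓ

/-- The intermediate destination `x(i, w) = ⌊w / m^{j(i,w)}⌋ · m^{j(i,w)}`. -/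
def interDest (m ℓ i w : ℕ) : ℕ :=
  (w / m ^ topDiff m ℓ i w) * m ^ topDiff m ℓ i w

/-- The trajectory `i_0 = i`, `i_{k+1} = x(i_k, w)` (frozen once it reaches `w`). -/
def traj (m ℓ w i : ℕ) : ℕ → ℕ
  | 0 => i
  | k + 1 => if traj m ℓ w i k < w then interDest m ℓ (traj m ℓ w i k) w
             else traj m ℓ w i k

/-!
`x(i, w)` keeps the base-`m` digits of `w` at positions `≥ j(i, w)` and zeroes the others, so
unless it equals `w`, its highest disagreement with `w` lies strictly below `j(i, w)`. All levels
are `< ℓ` (both numbers have zero digits from position `ℓ` on), so `j(i_k, w) + k < ℓ` as long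
as `i_k < w`, which forces `i_ℓ = w`.
-/

lemma digit_div_pow (m k t a : ℕ) : digit m t (a / m ^ k) = digit m (t + k) a := by
  rw [digit, digit, Nat.div_div_eq_div_mul, ← pow_add, add_comm]

lemma digit_eq_zero_of_lt_pow {m t a : ℕ} (h : a < m ^ t) : digit m t a = 0 := by
  rw [digit, Nat.div_eq_of_lt h, Nat.zero_mod]

lemma eq_of_digit_eq {m n a b : ℕ} (ha : a < m ^ n) (hb : b < m ^ n)
    (h : ∀ t < n, digit m t a = digit m t b) : a = b := by
  induction n generalizing a b with
  | zero => rw [pow_zero] at ha hb; omega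
  | succ n ih =>
    rw [pow_succ'] at ha hb
    have hdiv : a / m = b / m :=
      ih (Nat.div_lt_of_lt_mul ha) (Nat.div_lt_of_lt_mul hb) fun t ht => by
        simpa only [← digit_div_pow m 1, pow_one] using h (t + 1) (by omega)
    have hmod : a % m = b % m := by simpa [digit] using h 0 n.succ_pos
    rw [← Nat.div_add_mod a m, ← Nat.div_add_mod b m, hdiv, hmod]

lemma topDiff_lt {m ℓ i w : ℕ} (hi : i < m ^ ℓ) (hw : w < m ^ ℓ) (hne : i ≠ w) :
    topDiff m ℓ i w < ℓ := by
  obtain ⟨t, htℓ, ht⟩ : ∃ t < ℓ, digit m t i ≠ digit m t w := by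
    by_contra! h
    exact hne (eq_of_digit_eq hi hw h)
  have hspec : digit m (topDiff m ℓ i w) i ≠ digit m (topDiff m ℓ i w) w :=
    Nat.findGreatest_spec (P := fun t => digit m t i ≠ digit m t w) htℓ.le ht
  have hle : topDiff m ℓ i w ≤ ℓ := Nat.findGreatest_le ℓ
  refine hle.lt_of_ne fun hℓ => hspec ?_
  rw [hℓ, digit_eq_zero_of_lt_pow hi, digit_eq_zero_of_lt_pow hw]

lemma topDiff_lt_of_div_pow_eq {m ℓ j a w : ℕ} (hj : 0 < j) (h : a / m ^ j = w / m ^ j) :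
    topDiff m ℓ a w < j := by
  by_contra! hle
  have hk : digit m (topDiff m ℓ a w) a ≠ digit m (topDiff m ℓ a w) w :=
    Nat.findGreatest_of_ne_zero (P := fun t => digit m t a ≠ digit m t w) rfl (by omega)
  apply hk
  rw [← Nat.sub_add_cancel hle, ← digit_div_pow, ← digit_div_pow, h]

lemma interDest_le (m ℓ i w : ℕ) : interDest m ℓ i w ≤ w :=
  Nat.div_mul_le_self _ _

lemma topDiff_interDest_lt {m ℓ i w : ℕ} (hm : 0 < m) (hne : interDest m ℓ i w ≠ w) :
    topDiff m ℓ (interDest m ℓ i w) w < topDiff m ℓ i w := by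
  have hj : 0 < topDiff m ℓ i w := by
    refine Nat.pos_of_ne_zero fun hj => hne ?_
    rw [interDest, hj, pow_zero, Nat.div_one, Nat.mul_one]
  apply topDiff_lt_of_div_pow_eq hj
  rw [interDest, Nat.mul_div_cancel _ (pow_pos hm _)]

section traj

variable {m ℓ w i k : ℕ}

lemma traj_succ_of_lt (h : traj m ℓ w i k < w) :
    traj m ℓ w i (k + 1) = interDest m ℓ (traj m ℓ w i k) w := by
  rw [traj, if_pos h]

lemma traj_lt_of_succ_lt (h : traj m ℓ w i (k + 1) < w) : traj m ℓ w i k < w := by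
  by_contra hk
  rw [traj, if_neg hk] at h
  exact hk h

lemma traj_le (hiw : i ≤ w) (k : ℕ) : traj m ℓ w i k ≤ w := by
  induction k with
  | zero => exact hiw
  | succ k ih =>
    rw [traj]
    split_ifs
    exacts [interDest_le m ℓ _ w, ih]

lemma topDiff_traj_succ_lt (hm : 0 < m) (hk : traj m ℓ w i k < w)
    (hk' : traj m ℓ w i (k + 1) < w) :
    topDiff m ℓ (traj m ℓ w i (k + 1)) w < topDiff m ℓ (traj m ℓ w i k) w := by
  rw [traj_succ_of_lt hk] at hk' ⊢
  exact topDiff_interDest_lt hm hk'.ne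

lemma topDiff_traj_add_lt (hm : 0 < m) (hw : w < m ^ ℓ) :
    ∀ k, traj m ℓ w i k < w → topDiff m ℓ (traj m ℓ w i k) w + k < ℓ
  | 0, h => topDiff_lt (h.trans hw) hw h.ne
  | k + 1, h => by
    have hk := traj_lt_of_succ_lt h
    have hbound := topDiff_traj_add_lt hm hw k hk
    have hdecr := topDiff_traj_succ_lt hm hk h
    omega

end traj

theorem traj_reaches_and_levels_decrease_general (m ℓ i w : ℕ) (hm : 2 ≤ m)
    (hiw : i < w) (hw : w < m ^ ℓ) :
    (∃ k, k ≤ ℓ ∧ traj m ℓ w i k = w) ∧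
      (∀ k, traj m ℓ w i k < w → traj m ℓ w i (k + 1) < w →
        topDiff m ℓ (traj m ℓ w i (k + 1)) w < topDiff m ℓ (traj m ℓ w i k) w) := by
  have hm₀ : 0 < m := by omega
  refine ⟨⟨ℓ, le_rfl, ?_⟩, fun k => topDiff_traj_succ_lt hm₀⟩
  by_contra hne
  have hlt := (traj_le hiw.le ℓ).lt_of_ne hne
  have hbound := topDiff_traj_add_lt hm₀ hw ℓ hlt
  omega

theorem traj_reaches_and_levels_decrease (m ℓ i w : ℕ) (hm : 2 ≤ m) (hℓ : 1 ≤ ℓ)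
    (hiw : i < w) (hw : w < m ^ ℓ) :
    (∃ k, k ≤ ℓ ∧ traj m ℓ w i k = w) ∧
      (∀ k, traj m ℓ w i k < w → traj m ℓ w i (k + 1) < w →
        topDiff m ℓ (traj m ℓ w i (k + 1)) w < topDiff m ℓ (traj m ℓ w i k) w) :=
  traj_reaches_and_levels_decrease_general m ℓ i w hm hiw hw
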